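/- Let N and M be well-formed labeled portnets and let (M,φ) be a partial mirror of N. Let S = compose({N,M}) with initial marking i_S = i_N + i_M. For any markings m_0, …, m_{n+k} reachable from i_S and all transitions t_1,…,t_n of N and u_1,…,u_k of M such that m_0 →t_1 … →t_n m_n →u_1 … →u_k m_{n+k} and λ(t_i) = λ(u_j) = receive for all relevant i, j, there are markings m_0', …, m_{n+k}' such that m_0 = m_0' →u_1 … →u_k m_k' →t_1 … →t_n m_{n+k}' = m_{n+k}. -/

import Mathlib

namespace PortNets

/-- Direction of communication of a transition: send, receive, or internal (τ). -/
inductive Dir : Type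
  | send | receive | tau
deriving DecidableEq

/-- Preset of a node `x` with respect to a flow relation `F`. -/
def pre {Node : Type} (F : Set (Node × Node)) (x : Node) : Set Node := {y | (y, x) ∈ F}

/-- Postset of a node `x` with respect to a flow relation `F`. -/
def post {Node : Type} (F : Set (Node × Node)) (x : Node) : Set Node := {y | (x, y) ∈ F}

/-- Raw data of an open Petri net (with labels): internal places `P`, input places `I`,
output places `O`, transitions `T`, flow `F`, initial and final places, labeling `μ`. -/
structure OPN (Node L : Type) where
  P : Set Node
  I : Set Node
  O : Set Node
  T : Set Node
  F : Set (Node × Node)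
  init : Set Node
  fin : Set Node
  μ : Node → L

variable {Node L : Type}

/-- All places of an OPN. -/
def OPN.places (N : OPN Node L) : Set Node := N.P ∪ N.I ∪ N.O

/-- All nodes of an OPN. -/
def OPN.nodes (N : OPN Node L) : Set Node := N.places ∪ N.T

/-- Structural requirements of an open Petri net. -/
structure IsOPN (N : OPN Node L) : Prop where
  disjPI : N.P ∩ N.I = ∅
  disjPO : N.P ∩ N.O = ∅
  disjIO : N.I ∩ N.O = ∅
  disjPT : N.places ∩ N.T = ∅
  flow_sub : N.F ⊆ (N.places ×ˢ N.T) ∪ (N.T ×ˢ N.places)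
  no_pre_I : ∀ x ∈ N.I, pre N.F x = ∅
  no_post_O : ∀ x ∈ N.O, post N.F x = ∅
  not_both : ∀ t ∈ N.T, ¬((pre N.F t ∩ N.I).Nonempty ∧ (post N.F t ∩ N.O).Nonempty)
  init_sub : N.init ⊆ N.P
  fin_sub : N.fin ⊆ N.P

open Classical in
noncomputable def dir (N : OPN Node L) (t : Node) : Dir :=
  if (post N.F t ∩ N.O).Nonempty then Dir.send
  else if (pre N.F t ∩ N.I).Nonempty then Dir.receive
  else Dir.tau

open Classical in
noncomputable def fireAt (F : Set (Node × Node)) (m : Node → ℕ) (t : Node) : Node → ℕ :=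
  fun p => m p - (if (p, t) ∈ F then 1 else 0) + (if (t, p) ∈ F then 1 else 0)

/-- `Fires T F m t m'`: transition `t` is enabled in marking `m` and firing it yields `m'`. -/
def Fires (T : Set Node) (F : Set (Node × Node)) (m : Node → ℕ) (t : Node)
    (m' : Node → ℕ) : Prop :=
  t ∈ T ∧ (∀ p, (p, t) ∈ F → 1 ≤ m p) ∧ m' = fireAt F m t

/-- Firing a finite sequence of transitions. -/
inductive FireSeq (T : Set Node) (F : Set (Node × Node)) :
    (Node → ℕ) → List Node → (Node → ℕ) → Prop
  | nil (m : Node → ℕ) : FireSeq T F m [] m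
  | cons {m m' m'' : Node → ℕ} {t : Node} {σ : List Node} :
      Fires T F m t m' → FireSeq T F m' σ m'' → FireSeq T F m (t :: σ) m''

/-- Reachability of markings. -/
def Reach (T : Set Node) (F : Set (Node × Node)) (m m' : Node → ℕ) : Prop :=
  ∃ σ : List Node, FireSeq T F m σ m'

/-- Weak termination: from every marking reachable from `m0`, the marking `mf` is reachable. -/
def WeaklyTerminates (T : Set Node) (F : Set (Node × Node)) (m0 mf : Node → ℕ) : Prop :=
  ∀ m, Reach T F m0 m → Reach T F m mf

/-- The marking putting one token on each element of a set of places. -/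
noncomputable def mark (s : Set Node) : Node → ℕ := s.indicator fun _ => 1

/-- Flow relation of the skeleton: all arcs not adjacent to interface places. -/
def skF (N : OPN Node L) : Set (Node × Node) :=
  {x ∈ N.F | x.1 ∉ N.I ∪ N.O ∧ x.2 ∉ N.I ∪ N.O}

/-- The skeleton is a state machine: each transition has at most one place in its
preset and at most one in its postset. -/
def IsSM (N : OPN Node L) : Prop :=
  ∀ t ∈ N.T, (pre (skF N) t).Subsingleton ∧ (post (skF N) t).Subsingleton

/-- `x` lies on a path from `i` to `f` w.r.t. flow `F`. -/
def OnPath (F : Set (Node × Node)) (i f x : Node) : Prop :=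
  ∃ l : List Node, l ≠ [] ∧ List.Chain' (fun a b => (a, b) ∈ F) l ∧
    l.head? = some i ∧ l.getLast? = some f ∧ x ∈ l

/-- Workflow net (with places `P`, transitions `T`, flow `F`): `i` is the unique place with
empty preset, `f` the unique place with empty postset, and every node is on a path
from `i` to `f`. -/
def IsWFNOn (P T : Set Node) (F : Set (Node × Node)) (i f : Node) : Prop :=
  i ∈ P ∧ f ∈ P ∧ pre F i = ∅ ∧ post F f = ∅ ∧
    (∀ p ∈ P, pre F p = ∅ → p = i) ∧
    (∀ p ∈ P, post F p = ∅ → p = f) ∧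
    (∀ x ∈ P ∪ T, OnPath F i f x)

/-- Transition `t` is connected (by an arc, in either direction) to node `x`. -/
def connected (N : OPN Node L) (t x : Node) : Prop := (x, t) ∈ N.F ∨ (t, x) ∈ N.F

/-- A labeled portnet: an OPN whose skeleton is a state-machine workflow net, with
singleton `init` and `fin`, every transition connected to exactly one interface place,
transitions sharing an interface place sharing a label, and transitions sharing a
label sharing their interface place connections. -/
structure IsPortnet (N : OPN Node L) : Prop where
  isOPN : IsOPN N
  isSM : IsSM N
  init_single : ∃ i, N.init = {i}
  fin_single : ∃ f, N.fin = {f}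
  isWFN : ∀ i f, N.init = {i} → N.fin = {f} → IsWFNOn N.P N.T (skF N) i f
  one_iface : ∀ t ∈ N.T, ∃! x, x ∈ N.I ∪ N.O ∧ connected N t x
  same_iface_label : ∀ x ∈ N.I ∪ N.O, ∀ t t', t ∈ N.T → t' ∈ N.T →
    connected N t x → connected N t' x → N.μ t = N.μ t'
  same_label_iface : ∀ t ∈ N.T, ∀ t' ∈ N.T, N.μ t = N.μ t' →
    ∀ x ∈ N.I ∪ N.O, (connected N t x ↔ connected N t' x)

/-- Observable choices: distinct transitions in the postset of a place have distinct labels. -/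
def ObservableChoices (N : OPN Node L) : Prop :=
  ∀ p ∈ N.P, ∀ t ∈ post N.F p, ∀ t' ∈ post N.F p, t ≠ t' → N.μ t ≠ N.μ t'

/-- Choice property: all transitions in the postset of a place have the same direction. -/
def ChoiceProp (N : OPN Node L) : Prop :=
  ∀ p ∈ N.P, ∀ t ∈ post N.F p, ∀ t' ∈ post N.F p, dir N t = dir N t'

/-- Diamond property. -/
def DiamondProp (N : OPN Node L) : Prop :=
  ∀ p ∈ N.P, ∀ t ∈ post N.F p, ∀ t' ∈ post N.F p, dir N t ≠ dir N t' →
    ∀ q ∈ post (skF N) t, ∀ q' ∈ post (skF N) t',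
      ∃ u ∈ post (skF N) q, ∃ u' ∈ post (skF N) q',
        (post (skF N) u ∩ post (skF N) u').Nonempty ∧
        N.μ t = N.μ u' ∧ N.μ t' = N.μ u

/-- Loop property. -/
def LoopProp (N : OPN Node L) : Prop :=
  ∀ p ∈ N.P, ∀ t ∈ post N.F p, ∀ t' ∈ post N.F p, t ≠ t' → dir N t = dir N t' →
    ∀ (l : List Node) (t'' : Node),
      List.Chain' (fun a b => (a, b) ∈ N.F) (p :: t :: (l ++ [t''])) →
      t'' ∈ N.T → N.μ t'' = N.μ t' →
      (∀ u ∈ l, u ∈ N.T → N.μ u ≠ N.μ t') →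
      ∃ v ∈ t :: (l ++ [t'']), v ∈ N.T ∧ dir N v ≠ dir N t

/-- Well-formed labeled portnet. -/
def WellFormed (N : OPN Node L) : Prop :=
  IsPortnet N ∧ ObservableChoices N ∧ DiamondProp N ∧ LoopProp N

/-- `(M, φ)` is a partial mirror of the labeled portnet `N`. -/
structure IsPartialMirror (N M : OPN Node L) (φ : Node → Node) : Prop where
  portN : IsPortnet N
  portM : IsPortnet M
  inj : Set.InjOn φ M.nodes
  mapsP : ∀ x ∈ M.P, φ x ∈ N.P
  mapsT : ∀ x ∈ M.T, φ x ∈ N.T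
  mapsI : ∀ x ∈ M.I, φ x ∈ N.O
  mapsO : ∀ x ∈ M.O, φ x ∈ N.I
  flow_same : ∀ x y, (x, y) ∈ M.F → x ∉ M.I → y ∉ M.O → (φ x, φ y) ∈ N.F
  flow_rev : ∀ x y, (x, y) ∈ M.F → (x ∈ M.I ∨ y ∈ M.O) → (φ y, φ x) ∈ N.F
  init_eq : φ '' M.init = N.init
  fin_eq : φ '' M.fin = N.fin
  lab : ∀ t ∈ M.T, M.μ t = N.μ (φ t)
  send_cover : ∀ p ∈ M.P, ∀ t, (φ p, t) ∈ N.F → dir N t = Dir.send →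
    ∃ t', (p, t') ∈ M.F ∧ φ t' = t

/-- Composability of two OPNs. -/
def Composable (N M : OPN Node L) : Prop :=
  (N.nodes ∩ M.nodes = (N.I ∪ N.O) ∩ (M.I ∪ M.O)) ∧
  (((N.I ∩ M.O) ∪ (M.I ∩ N.O)).Nonempty →
    N.O ⊆ M.I ∧ M.O ⊆ N.I ∧ N.I ∩ M.I = ∅ ∧ N.O ∩ M.O = ∅)

open Classical in
noncomputable def compose2 (N M : OPN Node L) : OPN Node L where
  P := N.P ∪ M.P ∪ ((N.I ∪ M.I) ∩ (N.O ∪ M.O))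
  I := (N.I ∪ M.I) \ (N.O ∪ M.O)
  O := (N.O ∪ M.O) \ (N.I ∪ M.I)
  T := N.T ∪ M.T
  F := N.F ∪ M.F
  init := N.init ∪ M.init
  fin := N.fin ∪ M.fin
  μ := fun x => if x ∈ N.T then N.μ x else M.μ x

end PortNets

namespace PortNets

/-!
Two transitions can be fired in either order, reaching the same marking, as soon as the first
produces no token that the second consumes. A receive transition of `N` produces only on
internal places of `N`, and composable nets share nothing but interface places, so no
transition of `M` consumes from them.
-/

section Firing

variable {Node : Type} {T : Set Node} {F : Set (Node × Node)}

theorem Fires.swap {m₀ m₁ m₂ : Node → ℕ} {t u : Node}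
    (hdisj : Disjoint (post F t) (pre F u))
    (ht : Fires T F m₀ t m₁) (hu : Fires T F m₁ u m₂) :
    ∃ m', Fires T F m₀ u m' ∧ Fires T F m' t m₂ := by
  classical
  obtain ⟨htT, ht_en, rfl⟩ := ht
  obtain ⟨huT, hu_en, rfl⟩ := hu
  have hnot : ∀ p, (t, p) ∈ F → (p, u) ∉ F := fun p htp hpu =>
    Set.disjoint_left.mp hdisj (show p ∈ post F t from htp) (show p ∈ pre F u from hpu)
  refine ⟨fireAt F m₀ u, ⟨huT, fun p hpu => ?_, rfl⟩, htT, fun p hpt => ?_, ?_⟩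
  · have := hu_en p hpu
    simp only [fireAt, if_neg (fun htp => hnot p htp hpu)] at this
    omega
  · have h₁ := ht_en p hpt
    -- a place consumed by both still holds a token for `u` after `t`, hence held two
    by_cases hpu : (p, u) ∈ F
    · have h₂ := hu_en p hpu
      simp only [fireAt, if_pos hpt, if_pos hpu, if_neg (fun htp => hnot p htp hpu)] at h₂ ⊢
      omega
    · simp only [fireAt, if_neg hpu]
      omega
  · funext p
    have e₁ : (if (p, t) ∈ F then 1 else 0) ≤ m₀ p := by
      split_ifs with hpt
      exacts [ht_en p hpt, Nat.zero_le _]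
    have e₂ : (if (p, u) ∈ F then 1 else 0) ≤ fireAt F m₀ t p := by
      split_ifs with hpu
      exacts [hu_en p hpu, Nat.zero_le _]
    simp only [fireAt] at e₂ ⊢
    by_cases htp : (t, p) ∈ F
    · simp only [if_pos htp, if_neg (hnot p htp)] at e₂ ⊢
      split_ifs at e₁ ⊢ <;> omega
    · simp only [if_neg htp] at e₂ ⊢
      split_ifs at e₁ e₂ ⊢ <;> omega

theorem FireSeq.swap_single {m₀ m₁ m₂ : Node → ℕ} {ts : List Node} {u : Node}
    (hdisj : ∀ t ∈ ts, Disjoint (post F t) (pre F u))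
    (hts : FireSeq T F m₀ ts m₁) (hu : Fires T F m₁ u m₂) :
    ∃ m', Fires T F m₀ u m' ∧ FireSeq T F m' ts m₂ := by
  induction hts generalizing m₂ with
  | nil m => exact ⟨m₂, hu, .nil m₂⟩
  | cons ht _ ih =>
    obtain ⟨m, hu', hrest⟩ := ih (fun t h => hdisj t (List.mem_cons_of_mem _ h)) hu
    obtain ⟨m', hu'', ht'⟩ := Fires.swap (hdisj _ List.mem_cons_self) ht hu'
    exact ⟨m', hu'', .cons ht' hrest⟩

theorem FireSeq.swap {m₀ m₁ m₂ : Node → ℕ} {ts us : List Node}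
    (hdisj : ∀ t ∈ ts, ∀ u ∈ us, Disjoint (post F t) (pre F u))
    (hts : FireSeq T F m₀ ts m₁) (hus : FireSeq T F m₁ us m₂) :
    ∃ m', FireSeq T F m₀ us m' ∧ FireSeq T F m' ts m₂ := by
  induction hus generalizing m₀ with
  | nil m => exact ⟨m₀, .nil m₀, hts⟩
  | cons hu _ ih =>
    obtain ⟨m, hu', hts'⟩ :=
      FireSeq.swap_single (fun t h => hdisj t h _ List.mem_cons_self) hts hu
    obtain ⟨m', hus', hts''⟩ :=
      ih (fun t h u h' => hdisj t h u (List.mem_cons_of_mem _ h')) hts'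
    exact ⟨m', .cons hu' hus', hts''⟩

end Firing

section OpenNets

variable {Node L : Type} {N M : OPN Node L}

theorem IsOPN.notMem_places (hN : IsOPN N) {t : Node} (ht : t ∈ N.T) : t ∉ N.places :=
  fun hp => (Set.eq_empty_iff_forall_notMem.mp hN.disjPT) t ⟨hp, ht⟩

theorem IsOPN.snd_mem_places (hN : IsOPN N) {t p : Node} (htp : (t, p) ∈ N.F)
    (ht : t ∈ N.T) : p ∈ N.places := by
  rcases hN.flow_sub htp with h | h
  · exact absurd h.1 (hN.notMem_places ht)
  · exact h.2

theorem IsOPN.mem_nodes_of_mem_flow_left (hN : IsOPN N) {x y : Node} (hxy : (x, y) ∈ N.F) :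
    x ∈ N.nodes := by
  rcases hN.flow_sub hxy with h | h
  · exact Or.inl h.1
  · exact Or.inr h.1

theorem IsOPN.mem_nodes_of_mem_flow_right (hN : IsOPN N) {x y : Node} (hxy : (x, y) ∈ N.F) :
    y ∈ N.nodes := by
  rcases hN.flow_sub hxy with h | h
  · exact Or.inr h.2
  · exact Or.inl h.2

theorem IsOPN.mem_P_of_not_send (hN : IsOPN N) {t p : Node} (ht : t ∈ N.T)
    (hdt : dir N t ≠ Dir.send) (htp : (t, p) ∈ N.F) : p ∈ N.P := by
  rcases hN.snd_mem_places htp ht with (hP | hI) | hO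
  · exact hP
  · exact absurd (show t ∈ pre N.F p from htp) (by simp [hN.no_pre_I p hI])
  · have hsend : (post N.F t ∩ N.O).Nonempty := ⟨p, htp, hO⟩
    exact absurd (by simp [dir, hsend]) hdt

theorem Composable.symm (hc : Composable N M) : Composable M N := by
  refine ⟨by rw [Set.inter_comm, hc.1, Set.inter_comm], fun hne => ?_⟩
  obtain ⟨hNO, hMO, hII, hOO⟩ := hc.2 (by rwa [Set.union_comm] at hne)
  exact ⟨hMO, hNO, by rwa [Set.inter_comm], by rwa [Set.inter_comm]⟩

theorem Composable.mem_iface (hc : Composable N M) {x : Node} (hxN : x ∈ N.nodes)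
    (hxM : x ∈ M.nodes) : x ∈ N.I ∪ N.O := by
  have hx : x ∈ N.nodes ∩ M.nodes := ⟨hxN, hxM⟩
  rw [hc.1] at hx
  exact hx.1

theorem Composable.notMem_nodes_of_mem_T (hc : Composable N M) (hN : IsOPN N)
    {t : Node} (ht : t ∈ N.T) : t ∉ M.nodes := fun htM =>
  match hc.mem_iface (Or.inr ht) htM with
  | .inl hI => hN.notMem_places ht (Or.inl (Or.inr hI))
  | .inr hO => hN.notMem_places ht (Or.inr hO)

theorem disjoint_post_pre_compose2 (hc : Composable N M) (hN : IsOPN N) (hM : IsOPN M)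
    {t u : Node} (ht : t ∈ N.T) (hdt : dir N t ≠ Dir.send) (hu : u ∈ M.T) :
    Disjoint (post (compose2 N M).F t) (pre (compose2 N M).F u) := by
  refine Set.disjoint_left.mpr fun p (htp : (t, p) ∈ N.F ∨ (t, p) ∈ M.F)
    (hpu : (p, u) ∈ N.F ∨ (p, u) ∈ M.F) => ?_
  have htpN : (t, p) ∈ N.F := htp.resolve_right fun h =>
    hc.notMem_nodes_of_mem_T hN ht (hM.mem_nodes_of_mem_flow_left h)
  have hpuM : (p, u) ∈ M.F := hpu.resolve_left fun h =>
    hc.symm.notMem_nodes_of_mem_T hM hu (hN.mem_nodes_of_mem_flow_right h)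
  have hpP : p ∈ N.P := hN.mem_P_of_not_send ht hdt htpN
  rcases hc.mem_iface (Or.inl (Or.inl (Or.inl hpP))) (hM.mem_nodes_of_mem_flow_left hpuM)
    with hpI | hpO
  · exact hN.disjPI.subset ⟨hpP, hpI⟩
  · exact hN.disjPO.subset ⟨hpP, hpO⟩

end OpenNets

theorem swap_receives_general {Node L : Type} (N M : OPN Node L)
    (hN : WellFormed N) (hM : WellFormed M)
    (hcomp : Composable N M)
    (m0 mn mnk : Node → ℕ) (ts us : List Node)
    (hts : ∀ x ∈ ts, x ∈ N.T ∧ dir N x = Dir.receive)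
    (hus : ∀ x ∈ us, x ∈ M.T ∧ dir M x = Dir.receive)
    (h1 : FireSeq (compose2 N M).T (compose2 N M).F m0 ts mn)
    (h2 : FireSeq (compose2 N M).T (compose2 N M).F mn us mnk) :
    ∃ mk' : Node → ℕ,
      FireSeq (compose2 N M).T (compose2 N M).F m0 us mk' ∧
      FireSeq (compose2 N M).T (compose2 N M).F mk' ts mnk :=
  FireSeq.swap (fun t ht u hu => disjoint_post_pre_compose2 hcomp hN.1.isOPN hM.1.isOPN
    (hts t ht).1 (by simp [(hts t ht).2]) (hus u hu).1) h1 h2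

/-- swapping lemma: in the composition of a well-formed labeled portnet `N`
and its well-formed partial mirror `(M, φ)`, a sequence of receive transitions of `N`
followed by a sequence of receive transitions of `M` can be fired in the opposite order,
reaching the same marking. -/
theorem swap_receives {Node L : Type} (N M : OPN Node L) (φ : Node → Node)
    (hN : WellFormed N) (hM : WellFormed M)
    (hmir : IsPartialMirror N M φ) (hcomp : Composable N M)
    (m0 mn mnk : Node → ℕ) (ts us : List Node)
    (hreach : Reach (compose2 N M).T (compose2 N M).F (mark N.init + mark M.init) m0)
    (hts : ∀ x ∈ ts, x ∈ N.T ∧ dir N x = Dir.receive)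
    (hus : ∀ x ∈ us, x ∈ M.T ∧ dir M x = Dir.receive)
    (h1 : FireSeq (compose2 N M).T (compose2 N M).F m0 ts mn)
    (h2 : FireSeq (compose2 N M).T (compose2 N M).F mn us mnk) :
    ∃ mk' : Node → ℕ,
      FireSeq (compose2 N M).T (compose2 N M).F m0 us mk' ∧
      FireSeq (compose2 N M).T (compose2 N M).F mk' ts mnk :=
  swap_receives_general N M hN hM hcomp m0 mn mnk ts us hts hus h1 h2

end PortNets
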